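/- arXiv:2306.12114 — 2 statements merged into one kernel-verified Lean document; each statement's English description precedes it below -/
import Mathlib

section
/- For every sequence ε ∈ {0,1}^ℕ, every x ∈ (0,1] such that T_ε^n(x) ≠ 0 for all n ≥ 0, and every n ≥ 1, the approximation coefficient satisfies θ_n^ε(x) = (a_{d_n}/t_{d_n+1−s_n})·T_ε^n(x). -/
open MeasureTheory Filter Topology

/-- The limiting cumulative distribution function `F_ε(z)` of the approximation
coefficients, for a generalised α-Lüroth expansion determined by the sequence
`t` (1-indexed, `t 1 = 1`) and the sign sequence `ε` (0-indexed: `ε n` is the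
paper's `ε_{n+1}`).  Here `a_n = t n - t (n+1)` and the `n`-th summand is
`a_n` if `a_n / t_{n+1-ε_n} < z` and `t_{n+1-ε_n}·z` otherwise. -/
noncomputable def F (t : ℕ → ℝ) (ε : ℕ → Fin 2) (z : ℝ) : ℝ :=
  ∑' n : ℕ,
    if (t (n + 1) - t (n + 2)) / t (n + 2 - (ε n : ℕ)) < z
    then t (n + 1) - t (n + 2)
    else t (n + 2 - (ε n : ℕ)) * z

/-- The expected average value `M_ε = ∫_[0,1] (1 - F_ε) dλ`. -/
noncomputable def Mavg (t : ℕ → ℝ) (ε : ℕ → Fin 2) : ℝ :=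
  ∫ z in Set.Icc (0 : ℝ) 1, (1 - F t ε z)

/-- `t` generates an α-Lüroth partition: `(t_n)_{n ≥ 1}` is a strictly decreasing
sequence in `(0,1]` with `t 1 = 1` tending to `0`. -/
structure IsLurothSeq (t : ℕ → ℝ) : Prop where
  t_one : t 1 = 1
  pos : ∀ n, 1 ≤ n → 0 < t n
  anti : ∀ n, 1 ≤ n → t (n + 1) < t n
  tendsto_zero : Tendsto t atTop (nhds 0)

/-- For `x ∈ (0,1]`, `idx t x` is the (paper, 1-based) index `n` of the partition
element `A_n = (t_{n+1}, t_n]` containing `x`. -/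
noncomputable def idx (t : ℕ → ℝ) (x : ℝ) : ℕ :=
  sInf {n : ℕ | 1 ≤ n ∧ t (n + 1) < x}

/-- The generalised α-Lüroth transformation `T_ε` (the sign sequence `ε` is
0-indexed: `ε (n-1)` is the paper's `ε_n`). -/
noncomputable def Tmap (t : ℕ → ℝ) (ε : ℕ → Fin 2) (x : ℝ) : ℝ :=
  if x ≤ 0 then 0
  else if ε (idx t x - 1) = 0 then
    (x - t (idx t x + 1)) / (t (idx t x) - t (idx t x + 1))
  else
    (t (idx t x) - x) / (t (idx t x) - t (idx t x + 1))

/-- The digit `d_{k+1}(x)` (0-indexed in `k`). -/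
noncomputable def dig (t : ℕ → ℝ) (ε : ℕ → Fin 2) (x : ℝ) (k : ℕ) : ℕ :=
  idx t ((Tmap t ε)^[k] x)

/-- The sign `s_{k+1}(x) = ε_{d_{k+1}(x)}` (0-indexed in `k`, valued in `{0,1} ⊆ ℕ`). -/
noncomputable def sgn (t : ℕ → ℝ) (ε : ℕ → Fin 2) (x : ℝ) (k : ℕ) : ℕ :=
  (ε (dig t ε x k - 1) : ℕ)

/-- The `n`-th approximation `p_n/q_n` of `x`:
`Σ_{k=1}^n (−1)^{s_1+⋯+s_{k−1}} t_{d_k+1−s_k} Π_{i=1}^{k−1} a_{d_i}`. -/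
noncomputable def approx (t : ℕ → ℝ) (ε : ℕ → Fin 2) (x : ℝ) (n : ℕ) : ℝ :=
  ∑ k ∈ Finset.range n,
    (-1 : ℝ) ^ (∑ i ∈ Finset.range k, sgn t ε x i) *
      (t (dig t ε x k + 1 - sgn t ε x k) *
        ∏ i ∈ Finset.range k, (t (dig t ε x i) - t (dig t ε x i + 1)))

/-- The denominator `q_n = (t_{d_n+1−s_n} Π_{i=1}^{n−1} a_{d_i})⁻¹` (paper `n ≥ 1`). -/
noncomputable def qden (t : ℕ → ℝ) (ε : ℕ → Fin 2) (x : ℝ) (n : ℕ) : ℝ :=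
  1 / (t (dig t ε x (n - 1) + 1 - sgn t ε x (n - 1)) *
      ∏ i ∈ Finset.range (n - 1), (t (dig t ε x i) - t (dig t ε x i + 1)))

/-- The approximation coefficient `θ_n^ε(x) = q_n · |x − p_n/q_n|`. -/
noncomputable def theta (t : ℕ → ℝ) (ε : ℕ → Fin 2) (x : ℝ) (n : ℕ) : ℝ :=
  qden t ε x n * |x - approx t ε x n|

lemma idx_mem (t : ℕ → ℝ) (ht : IsLurothSeq t) {y : ℝ} (hy : y ∈ Set.Ioc (0:ℝ) 1) :
    1 ≤ idx t y ∧ t (idx t y + 1) < y ∧ y ≤ t (idx t y) := by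
  have hne : {n : ℕ | 1 ≤ n ∧ t (n + 1) < y}.Nonempty := by
    have h := ht.tendsto_zero.eventually (Filter.Tendsto.eventually_lt_const hy.1 tendsto_id)
    obtain ⟨N, hN⟩ := h.exists_forall_of_atTop
    exact ⟨max N 1, le_max_right _ _, hN _ (le_trans (le_max_left _ _) (Nat.le_succ _))⟩
  simp only [idx]
  have hmem := Nat.sInf_mem hne
  obtain ⟨h1, h2⟩ := hmem
  refine ⟨h1, h2, ?_⟩
  rcases eq_or_lt_of_le h1 with h | h
  · rw [← h, ht.t_one]; exact hy.2
  · have hnot : sInf {n : ℕ | 1 ≤ n ∧ t (n + 1) < y} - 1 ∉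
        {n : ℕ | 1 ≤ n ∧ t (n + 1) < y} := Nat.notMem_of_lt_sInf (by omega)
    simp only [Set.mem_setOf_eq, not_and, not_lt] at hnot
    have h2' := hnot (by omega)
    rwa [Nat.sub_add_cancel (by omega)] at h2'

lemma fin2_cases (a : Fin 2) : a = 0 ∨ a = 1 := by omega

lemma step_eq (t : ℕ → ℝ) (ht : IsLurothSeq t) (ε : ℕ → Fin 2) {y : ℝ}
    (hy : y ∈ Set.Ioc (0:ℝ) 1) :
    y = t (idx t y + 1 - (ε (idx t y - 1) : ℕ)) +
      (-1 : ℝ) ^ ((ε (idx t y - 1) : ℕ)) *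
        ((t (idx t y) - t (idx t y + 1)) * Tmap t ε y) := by
  obtain ⟨h1, h2, h3⟩ := idx_mem t ht hy
  set d := idx t y with hd
  have ha : t (d + 1) < t d := ht.anti d h1
  have ha' : t d - t (d + 1) ≠ 0 := by linarith
  rcases fin2_cases (ε (d - 1)) with h | h <;>
    simp only [Tmap, if_neg (not_le.2 hy.1), ← hd, h, if_pos, if_neg] <;>
    simp only [Fin.val_zero, Fin.val_one, pow_zero, pow_one, Nat.sub_zero,
      Nat.add_sub_cancel] <;>
    first
      | (field_simp; ring1)
      | (rw [if_neg (show (1 : Fin 2) ≠ 0 by decide)]; field_simp; ring)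

lemma Tmap_mem (t : ℕ → ℝ) (ht : IsLurothSeq t) (ε : ℕ → Fin 2) {y : ℝ}
    (hy : y ∈ Set.Ioc (0:ℝ) 1) : Tmap t ε y ∈ Set.Icc (0:ℝ) 1 := by
  obtain ⟨h1, h2, h3⟩ := idx_mem t ht hy
  set d := idx t y with hd
  have ha : t (d + 1) < t d := ht.anti d h1
  rw [Tmap, if_neg (not_le.2 hy.1), ← hd]
  split <;> constructor
  · exact div_nonneg (by linarith) (by linarith)
  · rw [div_le_one (by linarith)]; linarith
  · exact div_nonneg (by linarith) (by linarith)
  · rw [div_le_one (by linarith)]; linarith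

lemma theta_aux (t : ℕ → ℝ) (ht : IsLurothSeq t) (ε : ℕ → Fin 2)
    (x : ℝ) (hx : x ∈ Set.Ioc (0 : ℝ) 1)
    (horbit : ∀ n : ℕ, (Tmap t ε)^[n] x ≠ 0) :
    ∀ n : ℕ, (Tmap t ε)^[n] x ∈ Set.Ioc (0:ℝ) 1 := by
  intro n
  induction n with
  | zero => exact hx
  | succ k ih =>
    have h := Tmap_mem t ht ε ih
    have h0 := horbit (k + 1)
    rw [Function.iterate_succ_apply'] at h0 ⊢
    exact ⟨lt_of_le_of_ne h.1 (Ne.symm h0), h.2⟩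

lemma key_eq (t : ℕ → ℝ) (ht : IsLurothSeq t) (ε : ℕ → Fin 2)
    (x : ℝ) (hx : x ∈ Set.Ioc (0 : ℝ) 1)
    (horbit : ∀ n : ℕ, (Tmap t ε)^[n] x ≠ 0) (n : ℕ) :
    x - approx t ε x n =
      (-1 : ℝ) ^ (∑ i ∈ Finset.range n, sgn t ε x i) *
        ((∏ i ∈ Finset.range n, (t (dig t ε x i) - t (dig t ε x i + 1))) *
          (Tmap t ε)^[n] x) := by
  induction n with
  | zero => simp [approx]
  | succ m ih =>
    have hmem := theta_aux t ht ε x hx horbit m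
    have hstep := step_eq t ht ε hmem
    rw [approx, Finset.sum_range_succ, ← approx, Finset.prod_range_succ,
      Finset.sum_range_succ, Function.iterate_succ_apply']
    have hd : idx t ((Tmap t ε)^[m] x) = dig t ε x m := rfl
    rw [hd] at hstep
    have hs : (ε (dig t ε x m - 1) : ℕ) = sgn t ε x m := rfl
    rw [hs] at hstep
    have : x - approx t ε x m =
      (-1 : ℝ) ^ (∑ i ∈ Finset.range m, sgn t ε x i) *
        ((∏ i ∈ Finset.range m, (t (dig t ε x i) - t (dig t ε x i + 1))) *
          (t (dig t ε x m + 1 - sgn t ε x m) +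
            (-1 : ℝ) ^ (sgn t ε x m) *
              ((t (dig t ε x m) - t (dig t ε x m + 1)) *
                Tmap t ε ((Tmap t ε)^[m] x)))) := by
      rw [ih, ← hstep]
    rw [pow_add]
    linarith [this]

/-- For every `ε ∈ {0,1}^ℕ`, every `x ∈ (0,1]` whose `T_ε` orbit never
hits `0`, and every `n ≥ 1`, `θ_n^ε(x) = (a_{d_n}/t_{d_n+1−s_n}) · T_ε^n(x)`. -/
theorem theta_eq (t : ℕ → ℝ) (ht : IsLurothSeq t) (ε : ℕ → Fin 2)
    (x : ℝ) (hx : x ∈ Set.Ioc (0 : ℝ) 1)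
    (horbit : ∀ n : ℕ, (Tmap t ε)^[n] x ≠ 0)
    (n : ℕ) (hn : 1 ≤ n) :
    theta t ε x n =
      (t (dig t ε x (n - 1)) - t (dig t ε x (n - 1) + 1)) /
          t (dig t ε x (n - 1) + 1 - sgn t ε x (n - 1)) *
        (Tmap t ε)^[n] x := by
  obtain ⟨m, rfl⟩ : ∃ m, n = m + 1 := ⟨n - 1, by omega⟩
  have hkey := key_eq t ht ε x hx horbit (m + 1)
  have hTpos : 0 ≤ (Tmap t ε)^[m + 1] x := (theta_aux t ht ε x hx horbit (m + 1)).1.le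
  have hdig : ∀ i, 1 ≤ dig t ε x i := fun i =>
    (idx_mem t ht (theta_aux t ht ε x hx horbit i)).1
  have hapos : ∀ i, 0 < t (dig t ε x i) - t (dig t ε x i + 1) := fun i =>
    sub_pos.2 (ht.anti _ (hdig i))
  have hppos : 0 < ∏ i ∈ Finset.range m, (t (dig t ε x i) - t (dig t ε x i + 1)) :=
    Finset.prod_pos fun i _ => hapos i
  have hsle : sgn t ε x m ≤ 1 := by
    have : (ε (dig t ε x m - 1) : ℕ) < 2 := (ε _).2
    simp only [sgn]; omega
  have htpos : 0 < t (dig t ε x m + 1 - sgn t ε x m) :=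
    ht.pos _ (by have := hdig m; omega)
  rw [theta, hkey, abs_mul, abs_mul, abs_pow, abs_neg, abs_one, one_pow, one_mul,
    abs_of_nonneg hTpos, abs_of_pos (Finset.prod_pos fun i _ => hapos i),
    Finset.prod_range_succ, qden]
  simp only [Nat.add_sub_cancel]
  field_simp
end

section
/- For every sequence ε ∈ {0,1}^ℕ and every x ∈ (0,1] such that T_ε^n(x) ≠ 0 for all n ≥ 0, the n-th approximations converge to x; that is, x = Σ_{n≥1} (−1)^{s_1+⋯+s_{n−1}} t_{d_n+1−s_n} Π_{i=1}^{n−1} a_{d_i}, equivalently lim_{n→∞} p_n/q_n = x. -/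
open MeasureTheory Filter Topology

lemma LurothAux.t_mono {t : ℕ → ℝ} (ht : IsLurothSeq t) :
    ∀ m n, 1 ≤ m → m ≤ n → t n ≤ t m := by
  intro m n hm hmn
  induction n with
  | zero => omega
  | succ k ih =>
    rcases Nat.lt_or_ge m (k + 1) with h | h
    · have hk : m ≤ k := by omega
      have h1 : 1 ≤ k := le_trans hm hk
      exact le_trans (le_of_lt (ht.anti k h1)) (ih hk)
    · have : m = k + 1 := le_antisymm hmn h
      rw [this]

lemma LurothAux.idx_spec {t : ℕ → ℝ} (ht : IsLurothSeq t) {x : ℝ}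
    (hx : x ∈ Set.Ioc (0 : ℝ) 1) :
    1 ≤ idx t x ∧ t (idx t x + 1) < x ∧ x ≤ t (idx t x) := by
  have hne : {n : ℕ | 1 ≤ n ∧ t (n + 1) < x}.Nonempty := by
    have h := ht.tendsto_zero.eventually_lt_const hx.1
    obtain ⟨N, hN⟩ := Filter.eventually_atTop.mp h
    refine ⟨max N 1, le_max_right _ _, hN _ ?_⟩
    exact le_trans (le_max_left N 1) (Nat.le_succ _)
  have hmem := Nat.sInf_mem hne
  have h1 : 1 ≤ idx t x := hmem.1
  refine ⟨h1, hmem.2, ?_⟩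
  rcases Nat.lt_or_ge 1 (idx t x) with h | h
  · obtain ⟨k, hk⟩ : ∃ k, idx t x = k + 1 := ⟨idx t x - 1, by omega⟩
    have hk1 : 1 ≤ k := by omega
    have hklt : k < idx t x := by omega
    have hknot : k ∉ {n : ℕ | 1 ≤ n ∧ t (n + 1) < x} :=
      Nat.notMem_of_lt_sInf hklt
    have : ¬ t (k + 1) < x := fun hc => hknot ⟨hk1, hc⟩
    rw [hk]
    linarith [not_lt.mp this]
  · have : idx t x = 1 := le_antisymm h h1
    rw [this, ht.t_one]
    exact hx.2

lemma LurothAux.step {t : ℕ → ℝ} (ht : IsLurothSeq t) (ε : ℕ → Fin 2) {x : ℝ}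
    (hx : x ∈ Set.Ioc (0 : ℝ) 1) :
    x = t (idx t x + 1 - (ε (idx t x - 1) : ℕ)) +
        (-1 : ℝ) ^ ((ε (idx t x - 1) : ℕ)) *
          (t (idx t x) - t (idx t x + 1)) * Tmap t ε x ∧
      Tmap t ε x ∈ Set.Icc (0 : ℝ) 1 := by
  obtain ⟨h1, h2, h3⟩ := LurothAux.idx_spec ht hx
  set n := idx t x with hn
  have ha : (0 : ℝ) < t n - t (n + 1) := sub_pos.2 (ht.anti n h1)
  have hx0 : ¬ x ≤ 0 := not_le.2 hx.1
  have hval := (ε (n - 1)).isLt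
  rcases (show (ε (n - 1) : ℕ) = 0 ∨ (ε (n - 1) : ℕ) = 1 by omega) with hs | hs
  · have hfz : ε (n - 1) = 0 := Fin.ext (by simpa using hs)
    have hT : Tmap t ε x = (x - t (n + 1)) / (t n - t (n + 1)) := by
      rw [Tmap, if_neg hx0, if_pos (by rw [← hn]; exact hfz)]
    constructor
    · rw [hT, hs]
      simp only [pow_zero, Nat.add_sub_cancel, Nat.sub_zero]
      field_simp
      ring
    · rw [hT]
      constructor
      · exact div_nonneg (by linarith) ha.le
      · rw [div_le_one ha]; linarith
  · have hfz : ε (n - 1) ≠ 0 := by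
      intro hc
      rw [hc] at hs
      simp at hs
    have hT : Tmap t ε x = (t n - x) / (t n - t (n + 1)) := by
      rw [Tmap, if_neg hx0, if_neg (by rw [← hn]; exact hfz)]
    constructor
    · rw [hT, hs]
      simp only [pow_one, Nat.add_sub_cancel]
      field_simp
      ring
    · rw [hT]
      constructor
      · exact div_nonneg (by linarith) ha.le
      · rw [div_le_one ha]; linarith

lemma LurothAux.orbit_mem {t : ℕ → ℝ} (ht : IsLurothSeq t) (ε : ℕ → Fin 2) {x : ℝ}
    (hx : x ∈ Set.Ioc (0 : ℝ) 1)
    (horbit : ∀ n : ℕ, (Tmap t ε)^[n] x ≠ 0) :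
    ∀ k, (Tmap t ε)^[k] x ∈ Set.Ioc (0 : ℝ) 1 := by
  intro k
  induction k with
  | zero => simpa using hx
  | succ m ih =>
    have h := (LurothAux.step ht ε ih).2
    rw [Function.iterate_succ_apply']
    have hne := horbit (m + 1)
    rw [Function.iterate_succ_apply'] at hne
    exact ⟨lt_of_le_of_ne h.1 (Ne.symm hne), h.2⟩

lemma LurothAux.key {t : ℕ → ℝ} (ht : IsLurothSeq t) (ε : ℕ → Fin 2) {x : ℝ}
    (hx : x ∈ Set.Ioc (0 : ℝ) 1)
    (horbit : ∀ n : ℕ, (Tmap t ε)^[n] x ≠ 0) (n : ℕ) :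
    x = approx t ε x n +
      (-1 : ℝ) ^ (∑ i ∈ Finset.range n, sgn t ε x i) *
        (∏ i ∈ Finset.range n, (t (dig t ε x i) - t (dig t ε x i + 1))) *
        (Tmap t ε)^[n] x := by
  induction n with
  | zero => simp [approx]
  | succ m ih =>
    have hy : (Tmap t ε)^[m] x ∈ Set.Ioc (0 : ℝ) 1 :=
      LurothAux.orbit_mem ht ε hx horbit m
    have hstep := (LurothAux.step ht ε hy).1
    have hd : idx t ((Tmap t ε)^[m] x) = dig t ε x m := rfl
    rw [hd] at hstep
    have hs : (ε (dig t ε x m - 1) : ℕ) = sgn t ε x m := rfl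
    rw [hs] at hstep
    rw [Function.iterate_succ_apply', Finset.sum_range_succ, Finset.prod_range_succ,
      approx, Finset.sum_range_succ, ← approx, pow_add]
    set w := Tmap t ε ((Tmap t ε)^[m] x) with hw
    calc x = approx t ε x m +
        (-1 : ℝ) ^ (∑ i ∈ Finset.range m, sgn t ε x i) *
          (∏ i ∈ Finset.range m, (t (dig t ε x i) - t (dig t ε x i + 1))) *
          (Tmap t ε)^[m] x := ih
      _ = _ := by rw [hstep]; ring

/-- For every `ε ∈ {0,1}^ℕ` and every `x ∈ (0,1]` whose `T_ε` orbit
never hits `0`, the `n`-th approximations `p_n/q_n` converge to `x`, i.e.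
`x = Σ_{n≥1} (−1)^{s_1+⋯+s_{n−1}} t_{d_n+1−s_n} Π_{i=1}^{n−1} a_{d_i}`. -/
theorem approx_tendsto (t : ℕ → ℝ) (ht : IsLurothSeq t) (ε : ℕ → Fin 2)
    (x : ℝ) (hx : x ∈ Set.Ioc (0 : ℝ) 1)
    (horbit : ∀ n : ℕ, (Tmap t ε)^[n] x ≠ 0) :
    Tendsto (fun n => approx t ε x n) atTop (nhds x) := by
  have ht2pos : 0 < t 2 := ht.pos 2 (by omega)
  have ht2lt : t 2 < 1 := by
    have := ht.anti 1 le_rfl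
    rwa [ht.t_one] at this
  set c : ℝ := max (1 - t 2) (t 2) with hc
  have hc0 : 0 ≤ c := le_trans ht2pos.le (le_max_right _ _)
  have hc1 : c < 1 := max_lt (by linarith) ht2lt
  -- each a_n ≤ c
  have ha_le : ∀ n, 1 ≤ n → t n - t (n + 1) ≤ c := by
    intro n hn
    rcases Nat.lt_or_ge 1 n with h | h
    · have h2 : 2 ≤ n := h
      have hle : t n ≤ t 2 := LurothAux.t_mono ht 2 n (by omega) h2
      have hpos : 0 < t (n + 1) := ht.pos (n + 1) (by omega)
      calc t n - t (n + 1) ≤ t n := by linarith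
        _ ≤ t 2 := hle
        _ ≤ c := le_max_right _ _
    · have hn1 : n = 1 := le_antisymm h hn
      rw [hn1, ht.t_one]
      exact le_max_left _ _
  have ha_pos : ∀ n, 1 ≤ n → 0 < t n - t (n + 1) := fun n hn =>
    sub_pos.2 (ht.anti n hn)
  -- bound: |approx n - x| ≤ c ^ n
  have hbound : ∀ n, |approx t ε x n - x| ≤ c ^ n := by
    intro n
    have hkey := LurothAux.key ht ε hx horbit n
    have hdig1 : ∀ i, 1 ≤ dig t ε x i := fun i =>
      (LurothAux.idx_spec ht (LurothAux.orbit_mem ht ε hx horbit i)).1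
    have hxn := LurothAux.orbit_mem ht ε hx horbit n
    have hprod_nonneg : 0 ≤ ∏ i ∈ Finset.range n,
        (t (dig t ε x i) - t (dig t ε x i + 1)) :=
      Finset.prod_nonneg fun i _ => (ha_pos _ (hdig1 i)).le
    have hprod_le : (∏ i ∈ Finset.range n,
        (t (dig t ε x i) - t (dig t ε x i + 1))) ≤ c ^ n := by
      calc (∏ i ∈ Finset.range n, (t (dig t ε x i) - t (dig t ε x i + 1)))
          ≤ ∏ _i ∈ Finset.range n, c :=
            Finset.prod_le_prod (fun i _ => (ha_pos _ (hdig1 i)).le)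
              (fun i _ => ha_le _ (hdig1 i))
        _ = c ^ n := by simp
    have heq : approx t ε x n - x =
        -((-1 : ℝ) ^ (∑ i ∈ Finset.range n, sgn t ε x i) *
          (∏ i ∈ Finset.range n, (t (dig t ε x i) - t (dig t ε x i + 1))) *
          (Tmap t ε)^[n] x) := by
      linear_combination -hkey
    rw [heq, abs_neg, abs_mul, abs_mul, abs_pow, abs_neg, abs_one, one_pow,
      one_mul, abs_of_nonneg hprod_nonneg, abs_of_pos hxn.1]
    calc (∏ i ∈ Finset.range n, (t (dig t ε x i) - t (dig t ε x i + 1))) *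
          (Tmap t ε)^[n] x
        ≤ c ^ n * 1 := by
          apply mul_le_mul hprod_le hxn.2 hxn.1.le (pow_nonneg hc0 n)
      _ = c ^ n := mul_one _
  -- conclude
  rw [tendsto_iff_dist_tendsto_zero]
  simp only [Real.dist_eq]
  apply squeeze_zero (fun n => abs_nonneg _) hbound
  exact tendsto_pow_atTop_nhds_zero_of_lt_one hc0 hc1
end
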